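/- Let H be a hypergraph with an ordering v_1,…,v_n of its vertices, let i ∈ {0,…,n−1}, let T* be a minimal transversal of H_i, and let X ⊆ V_{i+1} \ T* be such that T* ∪ X is a minimal transversal of H_{i+1}. Then |X| ≤ |inc_{i+1}(v_{i+1})|. In particular, if the ordering v_1,…,v_n witnesses that H has weak degeneracy at most d, then |X| ≤ d. -/

import Mathlib

/-- `T` is a transversal of the induced hypergraph `H[S]`, where the ambient
hypergraph has edge family `E`: `T ⊆ S` and `T` meets every edge of `E` that is
contained in `S`. -/
def IsTransversal {α : Type*} [DecidableEq α]
    (E : Finset (Finset α)) (S T : Finset α) : Prop :=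
  T ⊆ S ∧ ∀ e ∈ E, e ⊆ S → (e ∩ T).Nonempty

/-- `T` is a minimal transversal of `H[S]`: it is a transversal and no proper
subset of it is a transversal. -/
def IsMinTransversal {α : Type*} [DecidableEq α]
    (E : Finset (Finset α)) (S T : Finset α) : Prop :=
  IsTransversal E S T ∧ ∀ T' ⊂ T, ¬ IsTransversal E S T'

/-!
Every vertex `x` of a minimal transversal has a private edge, one meeting the transversal
only in `x`. For `x ∈ X` this private edge cannot lie in `H_i`, since there `T*` already meets
it; hence it contains the new vertex `v_{i+1}`. Distinct vertices have distinct private edges,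
so `x ↦ e_x` injects `X` into `inc_{i+1}(v_{i+1})`.
-/

section

open Finset

variable {α : Type*} [DecidableEq α] {E : Finset (Finset α)} {S T X : Finset α} {a x : α}

theorem IsMinTransversal.exists_inter_eq_singleton (h : IsMinTransversal E S T) (hx : x ∈ T) :
    ∃ e ∈ E, e ⊆ S ∧ e ∩ T = {x} := by
  have hnot := h.2 _ (erase_ssubset hx)
  simp only [IsTransversal, not_and, not_forall, not_nonempty_iff_eq_empty] at hnot
  obtain ⟨e, he, heS, hempty⟩ := hnot ((erase_subset x T).trans h.1.1)
  rw [inter_erase, erase_eq_empty_iff] at hempty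
  refine ⟨e, he, heS, hempty.resolve_left ?_⟩
  exact (h.1.2 e he heS).ne_empty

theorem Finset.card_le_card_of_forall_exists_inter_eq_singleton {F : Finset (Finset α)}
    (hF : ∀ x ∈ X, ∃ e ∈ F, e ∩ T = {x}) : #X ≤ #F := by
  choose f hfF hfT using hF
  refine card_le_card_of_injOn (fun x => if hx : x ∈ X then f x hx else ∅) ?_ ?_
  · intro x hx
    simpa [dif_pos (mem_coe.mp hx)] using hfF x hx
  · intro x hx y hy hxy
    simp only [dif_pos (mem_coe.mp hx), dif_pos (mem_coe.mp hy)] at hxy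
    simpa [hxy, hfT y hy, eq_comm] using hfT x hx

theorem IsTransversal.mem_of_inter_union_eq_singleton (hT : IsTransversal E S T) {e : Finset α}
    (he : e ∈ E) (heS : e ⊆ insert a S) (hxT : x ∉ T) (hex : e ∩ (T ∪ X) = {x}) : a ∈ e := by
  by_contra ha
  obtain ⟨y, hy⟩ := hT.2 e he ((subset_insert_iff_of_notMem ha).mp heS)
  obtain ⟨hye, hyT⟩ := mem_inter.mp hy
  have hyx : y ∈ e ∩ (T ∪ X) := mem_inter.mpr ⟨hye, mem_union_left X hyT⟩
  rw [hex, mem_singleton] at hyx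
  exact hxT (hyx ▸ hyT)

theorem IsMinTransversal.card_le_card_filter_mem (hT : IsTransversal E S T) (hXT : Disjoint X T)
    (hTX : IsMinTransversal E (insert a S) (T ∪ X)) :
    #X ≤ #(E.filter (fun e => e ⊆ insert a S ∧ a ∈ e)) := by
  refine card_le_card_of_forall_exists_inter_eq_singleton (T := T ∪ X) fun x hx => ?_
  obtain ⟨e, he, heS, hex⟩ := hTX.exists_inter_eq_singleton (mem_union_right T hx)
  have hxT : x ∉ T := disjoint_left.mp hXT hx
  exact ⟨e, mem_filter.mpr ⟨he, heS, hT.mem_of_inter_union_eq_singleton he heS hxT hex⟩, hex⟩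

end

theorem card_extension_le_incidence_general
    {α : Type*} [DecidableEq α] {n : ℕ} (E : Finset (Finset α))
    (v : Fin n → α)
    (i : Fin n) (Tstar X : Finset α) (d : ℕ)
    (hT : IsMinTransversal E ((Finset.Iio i).image v) Tstar)
    (hX : X ⊆ (Finset.Iic i).image v \ Tstar)
    (hTX : IsMinTransversal E ((Finset.Iic i).image v) (Tstar ∪ X)) :
    X.card ≤ (E.filter (fun e => e ⊆ (Finset.Iic i).image v ∧ v i ∈ e)).card ∧
    ((∀ j : Fin n,
        (E.filter (fun e => e ⊆ (Finset.Iic j).image v ∧ v j ∈ e)).card ≤ d) →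
      X.card ≤ d) := by
  have hstep : (Finset.Iic i).image v = insert (v i) ((Finset.Iio i).image v) := by
    rw [← Finset.Iio_insert, Finset.image_insert]
  rw [hstep] at hTX ⊢
  have hcard := hTX.card_le_card_filter_mem hT.1 (Finset.subset_sdiff.mp hX).2
  refine ⟨hcard, fun hdeg => hcard.trans ?_⟩
  simpa only [hstep] using hdeg i

/-- Let `H` be a hypergraph with an ordering `v 0, …, v (n-1)` of its vertices,
let `i ∈ {0,…,n-1}`, let `T*` be a minimal transversal of `H_i = H[{v 0,…,v (i-1)}]`,
and let `X ⊆ V_{i+1} \ T*` (with `V_{i+1} = {v 0,…,v i}`) be such that `T* ∪ X` is a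
minimal transversal of `H_{i+1} = H[V_{i+1}]`. Then `|X| ≤ |inc_{i+1}(v_{i+1})|`
(the number of edges of `H_{i+1}` containing `v i`); in particular, if the ordering
witnesses that `H` has weak degeneracy at most `d`, then `|X| ≤ d`. -/
theorem card_extension_le_incidence
    {α : Type*} [DecidableEq α] {n : ℕ} (V : Finset α) (E : Finset (Finset α))
    (hE : ∀ e ∈ E, e ⊆ V)
    (v : Fin n → α) (hinj : Function.Injective v) (hV : V = Finset.univ.image v)
    (i : Fin n) (Tstar X : Finset α) (d : ℕ)
    (hT : IsMinTransversal E ((Finset.Iio i).image v) Tstar)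
    (hX : X ⊆ (Finset.Iic i).image v \ Tstar)
    (hTX : IsMinTransversal E ((Finset.Iic i).image v) (Tstar ∪ X)) :
    X.card ≤ (E.filter (fun e => e ⊆ (Finset.Iic i).image v ∧ v i ∈ e)).card ∧
    ((∀ j : Fin n,
        (E.filter (fun e => e ⊆ (Finset.Iic j).image v ∧ v j ∈ e)).card ≤ d) →
      X.card ≤ d) :=
  card_extension_le_incidence_general E v i Tstar X d hT hX hTX
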